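/- Let x_1,...,x_n ∈ ℝ^d with ‖x_i‖₂ ≤ 1, y_i ∈ {−1,1}, and let θ_t satisfy θ_t = θ_{t−1} − (η/(4s)) Σ_{i∈B_t} (θ_{t−1}ᵀx_i − 2y_i) x_i with constant learning rate η > 0 and batches B_t of size s. If θ_0 = 0 (zero initialization), then for every iteration t with 1 ≤ t ≤ T_0 := ⌈log_{1+η/4} 2⌉ and every i ∈ {1,...,n}, |θ_{t−1}ᵀx_i| < 2, hence sign(θ_{t−1}ᵀx_i − 2y_i) = −y_i for all i ∈ B_t. -/

import Mathlib

open Finset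
open scoped RealInnerProductSpace

/-!
With `r = 1 + η/4`, one step of the linearised update satisfies
`‖θ_t‖ + 2 ≤ r (‖θ_{t-1}‖ + 2)`, so from `θ_0 = 0` we get `‖θ_t‖ + 2 ≤ 2 r^t`. While
`r^(t-1) < 2`, i.e. for `t ≤ ⌈log_r 2⌉`, this forces `|⟪θ_{t-1}, x_i⟫| ≤ ‖θ_{t-1}‖ < 2`,
and then `θ_{t-1}ᵀx_i - 2y_i` has the sign of `-y_i`.
-/

section Step

variable {E : Type*} [NormedAddCommGroup E] [InnerProductSpace ℝ E]

lemma abs_inner_le_norm_of_norm_le_one (θ : E) {v : E} (hv : ‖v‖ ≤ 1) : |⟪θ, v⟫| ≤ ‖θ‖ :=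
  (abs_real_inner_le_norm θ v).trans (mul_le_of_le_one_right (norm_nonneg θ) hv)

lemma norm_sub_smul_sum_inner_sub_smul_le {ι : Type*} (S : Finset ι) {x : ι → E}
    (hx : ∀ i, ‖x i‖ ≤ 1) {y : ι → ℝ} (hy : ∀ i, |y i| ≤ 1) {η : ℝ} (hη : 0 ≤ η) (θ : E) :
    ‖θ - (η / (4 * #S)) • ∑ i ∈ S, (⟪θ, x i⟫ - 2 * y i) • x i‖ ≤ (1 + η / 4) * (‖θ‖ + 2) - 2 := by
  have hterm : ∀ i ∈ S, ‖(⟪θ, x i⟫ - 2 * y i) • x i‖ ≤ ‖θ‖ + 2 := fun i _ => by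
    rw [norm_smul, Real.norm_eq_abs]
    calc |⟪θ, x i⟫ - 2 * y i| * ‖x i‖ ≤ |⟪θ, x i⟫ - 2 * y i| :=
          mul_le_of_le_one_right (abs_nonneg _) (hx i)
      _ ≤ |⟪θ, x i⟫| + |2 * y i| := abs_sub _ _
      _ ≤ ‖θ‖ + 2 := by
          rw [abs_mul, abs_two]
          linarith [abs_inner_le_norm_of_norm_le_one θ (hx i), hy i]
  have hsum : ‖∑ i ∈ S, (⟪θ, x i⟫ - 2 * y i) • x i‖ ≤ #S * (‖θ‖ + 2) :=
    (norm_sum_le _ _).trans ((sum_le_card_nsmul S _ _ hterm).trans_eq (nsmul_eq_mul _ _))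
  -- `#S / #S ≤ 1` also covers `S = ∅`, where `#S / #S = 0`.
  have hcoef : η / (4 * #S) * #S ≤ η / 4 :=
    calc η / (4 * #S) * #S = η / 4 * (#S / #S) := by ring
      _ ≤ η / 4 := mul_le_of_le_one_right (by positivity) (div_self_le_one _)
  calc _ ≤ ‖θ‖ + η / (4 * #S) * ‖∑ i ∈ S, (⟪θ, x i⟫ - 2 * y i) • x i‖ := by
        refine (norm_sub_le _ _).trans_eq ?_
        rw [norm_smul, Real.norm_of_nonneg (by positivity)]
    _ ≤ ‖θ‖ + η / (4 * #S) * (#S * (‖θ‖ + 2)) := by gcongr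
    _ ≤ ‖θ‖ + η / 4 * (‖θ‖ + 2) := by rw [← mul_assoc]; gcongr
    _ = _ := by ring

end Step

lemma pow_lt_of_succ_le_ceil_logb {r b : ℝ} (hr : 1 < r) (hb : 0 < b) {n : ℕ}
    (hn : ((n + 1 : ℕ) : ℤ) ≤ ⌈Real.logb r b⌉) : r ^ n < b := by
  rw [Nat.cast_succ, Int.add_one_le_iff, Int.lt_ceil] at hn
  rw [← Real.rpow_natCast]
  exact (Real.lt_logb_iff_rpow_lt hr hb).mp (by exact_mod_cast hn)

lemma Real.sign_sub_two_mul_eq_neg {a y : ℝ} (ha : |a| < 2) (hy : y = 1 ∨ y = -1) :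
    Real.sign (a - 2 * y) = -y := by
  obtain ⟨ha₁, ha₂⟩ := abs_lt.mp ha
  rcases hy with rfl | rfl
  · exact Real.sign_of_neg (by linarith)
  · rw [Real.sign_of_pos (by linarith), neg_neg]

theorem stmt7_general (d n s : ℕ)
    (x : Fin n → EuclideanSpace ℝ (Fin d)) (hx : ∀ i, ‖x i‖ ≤ 1)
    (y : Fin n → ℝ) (hy : ∀ i, y i = 1 ∨ y i = -1)
    (B : ℕ → Finset (Fin n)) (hB : ∀ t, (B t).card = s)
    (η : ℝ) (hη : 0 < η)
    (θ : ℕ → EuclideanSpace ℝ (Fin d))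
    (hθ0 : θ 0 = 0)
    (hupd : ∀ t : ℕ, 1 ≤ t →
      θ t = θ (t - 1) - (η / (4 * s)) •
        ∑ i ∈ B t, (⟪θ (t - 1), x i⟫ - 2 * y i) • x i) :
    ∀ t : ℕ, 1 ≤ t → (t : ℤ) ≤ ⌈Real.logb (1 + η / 4) 2⌉ →
      (∀ i, |⟪θ (t - 1), x i⟫| < 2) ∧
      ∀ i ∈ B t, Real.sign (⟪θ (t - 1), x i⟫ - 2 * y i) = -y i := by
  have hy_abs : ∀ i, |y i| ≤ 1 := fun i => by rcases hy i with h | h <;> simp [h]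
  have hgrowth : ∀ k, ‖θ k‖ + 2 ≤ (1 + η / 4) ^ k * 2 := fun k => by
    simpa [hθ0] using le_geom (u := fun k => ‖θ k‖ + 2) (by positivity) k fun k _ => by
      have hstep := norm_sub_smul_sum_inner_sub_smul_le (B (k + 1)) hx hy_abs hη.le (θ k)
      have hupd_k : θ (k + 1) =
          θ k - (η / (4 * s)) • ∑ i ∈ B (k + 1), (⟪θ k, x i⟫ - 2 * y i) • x i :=
        hupd (k + 1) le_add_self
      rw [hB, ← hupd_k] at hstep
      linarith
  intro t ht htT
  obtain ⟨k, rfl⟩ := Nat.exists_eq_add_of_le' ht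
  have hpow := pow_lt_of_succ_le_ceil_logb (by linarith) two_pos htT
  have hinner : ∀ i, |⟪θ k, x i⟫| < 2 := fun i => by
    nlinarith [abs_inner_le_norm_of_norm_le_one (θ k) (hx i), hgrowth k]
  exact ⟨hinner, fun i _ => Real.sign_sub_two_mul_eq_neg (hinner i) (hy i)⟩

/-- Under zero initialization `θ_0 = 0`, for every iteration
`1 ≤ t ≤ T_0 := ⌈log_{1+η/4} 2⌉` all full inner products satisfy `|θ_{t-1}ᵀx_i| < 2`,
hence `sign(θ_{t-1}ᵀx_i - 2y_i) = -y_i` for all `i` in the batch. -/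
theorem stmt7 (d n s : ℕ) (hn : 0 < n) (hs : 0 < s)
    (x : Fin n → EuclideanSpace ℝ (Fin d)) (hx : ∀ i, ‖x i‖ ≤ 1)
    (y : Fin n → ℝ) (hy : ∀ i, y i = 1 ∨ y i = -1)
    (B : ℕ → Finset (Fin n)) (hB : ∀ t, (B t).card = s)
    (η : ℝ) (hη : 0 < η)
    (θ : ℕ → EuclideanSpace ℝ (Fin d))
    (hθ0 : θ 0 = 0)
    (hupd : ∀ t : ℕ, 1 ≤ t →
      θ t = θ (t - 1) - (η / (4 * s)) •
        ∑ i ∈ B t, (⟪θ (t - 1), x i⟫ - 2 * y i) • x i) :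
    ∀ t : ℕ, 1 ≤ t → (t : ℤ) ≤ ⌈Real.logb (1 + η / 4) 2⌉ →
      (∀ i, |⟪θ (t - 1), x i⟫| < 2) ∧
      ∀ i ∈ B t, Real.sign (⟪θ (t - 1), x i⟫ - 2 * y i) = -y i :=
  stmt7_general d n s x hx y hy B hB η hη θ hθ0 hupd
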